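/- The following matrix identity holds: ( I_{NK} − 𝔻(γ)[I_{GK} − Ñ_Σ(γ)^{-1}Rᵀ(R Ñ_Σ(γ)^{-1}Rᵀ)^{-1}R](𝔻(γ)ᵀ𝔻(γ))^{-1}𝔻(γ)ᵀ − (I_N ⊗ Σ^{-1})𝔻(γ)(𝔻(γ)ᵀ𝔻(γ))^{-1}Ñ_Σ(γ)(𝔻(γ)ᵀ𝔻(γ))^{-1}𝔻(γ)ᵀ ) · (I_N ⊗ Σ^{-1}) · 𝔻(γ)(𝔻(γ)ᵀ𝔻(γ))^{-1}Rᵀ = 0. -/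

import Mathlib

open Matrix MeasureTheory ProbabilityTheory
open scoped Kronecker Classical

noncomputable section

/-- The group-dummy matrix `D(γ)`: entry `(i, g)` is `1` if `γ i = g` and `0` otherwise. -/
def Dmat {N G : ℕ} (γ : Fin N → Fin G) : Matrix (Fin N) (Fin G) ℝ :=
  Matrix.of fun i g => if γ i = g then (1 : ℝ) else 0

/-- `𝔻(γ) = D(γ) ⊗ I_K`. -/
def Dbb {N G : ℕ} (K : ℕ) (γ : Fin N → Fin G) :
    Matrix (Fin N × Fin K) (Fin G × Fin K) ℝ :=
  Dmat γ ⊗ₖ (1 : Matrix (Fin K) (Fin K) ℝ)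

/-- The group sizes `n_g = #{i : γ i = g}`. -/
def ngrp {N G : ℕ} (γ : Fin N → Fin G) (g : Fin G) : ℕ :=
  Finset.card (Finset.filter (fun i => γ i = g) Finset.univ)

/-- `Ñ_Σ(γ) = diag(n_1, …, n_G) ⊗ Σ`. -/
def Ntil {N G K : ℕ} (γ : Fin N → Fin G) (S : Matrix (Fin K) (Fin K) ℝ) :
    Matrix (Fin G × Fin K) (Fin G × Fin K) ℝ :=
  (Matrix.diagonal fun g : Fin G => (ngrp γ g : ℝ)) ⊗ₖ S

/-- The unconstrained TSK group-mean estimator `α̃(γ, b) = (𝔻(γ)ᵀ𝔻(γ))⁻¹𝔻(γ)ᵀ b`. -/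
def alphaTil {N G K : ℕ} (γ : Fin N → Fin G) (b : Fin N × Fin K → ℝ) :
    Fin G × Fin K → ℝ :=
  (((Dbb K γ)ᵀ * Dbb K γ)⁻¹ * (Dbb K γ)ᵀ) *ᵥ b

/-- The constrained TSK estimator
`α̃_R(γ, b) = α̃(γ, b) − Ñ_Σ(γ)⁻¹Rᵀ[R Ñ_Σ(γ)⁻¹Rᵀ]⁻¹(R α̃(γ, b) − c)`. -/
def alphaTilR {N G K r : ℕ} (γ : Fin N → Fin G) (S : Matrix (Fin K) (Fin K) ℝ)
    (R : Matrix (Fin r) (Fin G × Fin K) ℝ) (c : Fin r → ℝ) (b : Fin N × Fin K → ℝ) :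
    Fin G × Fin K → ℝ :=
  alphaTil γ b -
    ((Ntil γ S)⁻¹ * Rᵀ * (R * (Ntil γ S)⁻¹ * Rᵀ)⁻¹) *ᵥ (R *ᵥ alphaTil γ b - c)

/-- `X` is an (`ι`-indexed) Gaussian random vector with mean `μ` and covariance matrix `C`:
it is measurable, and every linear functional of `X` has the corresponding one-dimensional
Gaussian law. -/
def IsGaussianVec {Ω ι : Type*} [MeasurableSpace Ω] [Fintype ι]
    (P : Measure Ω) (X : Ω → ι → ℝ) (μ : ι → ℝ) (C : Matrix ι ι ℝ) : Prop :=
  Measurable X ∧ ∀ l : ι → ℝ,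
    P.map (fun ω => l ⬝ᵥ X ω) = gaussianReal (l ⬝ᵥ μ) (Real.toNNReal (l ⬝ᵥ (C *ᵥ l)))

/-- The chi-squared distribution with `k` degrees of freedom, i.e. `Gamma(k/2, 1/2)`. -/
def chiSq (k : ℕ) : Measure ℝ := gammaMeasure ((k : ℝ) / 2) (1 / 2)

/-- The positive-semidefinite square root of a matrix (junk value `0` if the matrix is not
positive semidefinite). -/
def matSqrt {n : Type*} [Fintype n] [DecidableEq n] (M : Matrix n n ℝ) :
    Matrix n n ℝ :=
  if h : M.PosSemidef then
    h.1.eigenvectorUnitary.1 * diagonal ((↑) ∘ (√·) ∘ h.1.eigenvalues) *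
      (star h.1.eigenvectorUnitary : Matrix n n ℝ)
  else 0

/-- The squared Euclidean norm `‖v‖²`. -/
def sqNorm {ι : Type*} [Fintype ι] (v : ι → ℝ) : ℝ := ∑ i, v i ^ 2

/-- The Euclidean direction `v / ‖v‖` (junk value `0` when `v = 0`). -/
def dir {ι : Type*} [Fintype ι] (v : ι → ℝ) : ι → ℝ :=
  (Real.sqrt (sqNorm v))⁻¹ • v

/-- The `NT × NK` block-diagonal design matrix `𝕏` with diagonal blocks `X_i`. -/
def bigX {N T K : ℕ} (X : Fin N → Matrix (Fin T) (Fin K) ℝ) :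
    Matrix (Fin N × Fin T) (Fin N × Fin K) ℝ :=
  Matrix.of fun it jk => if it.1 = jk.1 then X it.1 it.2 jk.2 else 0

/-- The PCR estimator `α̂(γ, s) = (𝕏(γ)ᵀ𝕏(γ))⁻¹𝔻(γ)ᵀ s`, where `𝕏(γ) = 𝕏 𝔻(γ)`. -/
def alphaHat {N G K T : ℕ} (X : Fin N → Matrix (Fin T) (Fin K) ℝ)
    (γ : Fin N → Fin G) (s : Fin N × Fin K → ℝ) : Fin G × Fin K → ℝ :=
  (((bigX X * Dbb K γ)ᵀ * (bigX X * Dbb K γ))⁻¹ * (Dbb K γ)ᵀ) *ᵥ s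

/-- The constrained PCR estimator
`α̂_R(γ, s) = α̂(γ, s) − [𝕏(γ)ᵀ𝕏(γ)]⁻¹Rᵀ{R[𝕏(γ)ᵀ𝕏(γ)]⁻¹Rᵀ}⁻¹(R α̂(γ, s) − c)`. -/
def alphaHatR {N G K T r : ℕ} (X : Fin N → Matrix (Fin T) (Fin K) ℝ)
    (γ : Fin N → Fin G) (R : Matrix (Fin r) (Fin G × Fin K) ℝ) (c : Fin r → ℝ)
    (s : Fin N × Fin K → ℝ) : Fin G × Fin K → ℝ :=
  alphaHat X γ s -
    (((bigX X * Dbb K γ)ᵀ * (bigX X * Dbb K γ))⁻¹ * Rᵀ *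
      (R * ((bigX X * Dbb K γ)ᵀ * (bigX X * Dbb K γ))⁻¹ * Rᵀ)⁻¹) *ᵥ
      (R *ᵥ alphaHat X γ s - c)


lemma DmatT_mul_Dmat {N G : ℕ} (γ : Fin N → Fin G) :
    (Dmat γ)ᵀ * Dmat γ = Matrix.diagonal (fun g => (ngrp γ g : ℝ)) := by
  ext g g'
  simp only [Matrix.mul_apply, Matrix.transpose_apply, Dmat, Matrix.of_apply,
    Matrix.diagonal_apply, ngrp]
  rcases eq_or_ne g g' with rfl | h
  · simp only [if_pos rfl]
    rw [Finset.card_filter]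
    push_cast
    refine Finset.sum_congr rfl fun i _ => ?_
    by_cases hi : γ i = g <;> simp [hi]
  · rw [if_neg h, Finset.sum_eq_zero]
    intro i _
    by_cases hi : γ i = g
    · have hi' : γ i ≠ g' := fun hh => h (hi ▸ hh ▸ rfl)
      simp [hi, hi', h]
    · simp [hi]

lemma kron_diag_posDef {G K : ℕ} (d : Fin G → ℝ) (hd : ∀ g, 0 < d g)
    {S : Matrix (Fin K) (Fin K) ℝ} (hS : S.PosDef) :
    ((Matrix.diagonal d) ⊗ₖ S).PosDef := by
  have hSsym : ∀ k k', S k k' = S k' k := by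
    intro k k'
    conv_lhs => rw [← hS.1]
    rfl
  rw [Matrix.posDef_iff_dotProduct_mulVec]
  constructor
  · show _ᴴ = _
    ext ⟨g, k⟩ ⟨g', k'⟩
    simp only [Matrix.conjTranspose_apply, Matrix.kroneckerMap_apply, Matrix.diagonal_apply,
      star_trivial]
    rcases eq_or_ne g g' with rfl | h
    · simp [hSsym k k']
    · simp [h, Ne.symm h]
  · intro x hx
    have hstar : (star x : Fin G × Fin K → ℝ) = x := funext fun _ => rfl
    have hq : star x ⬝ᵥ ((Matrix.diagonal d ⊗ₖ S) *ᵥ x) =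
        ∑ g, d g * ((fun k => x (g, k)) ⬝ᵥ (S *ᵥ fun k => x (g, k))) := by
      rw [hstar, dotProduct, Fintype.sum_prod_type]
      refine Finset.sum_congr rfl fun g _ => ?_
      rw [dotProduct, Finset.mul_sum]
      refine Finset.sum_congr rfl fun k _ => ?_
      rw [Matrix.mulVec, dotProduct, Matrix.mulVec, dotProduct,
        Fintype.sum_prod_type]
      rw [Finset.sum_eq_single g]
      · simp only [Matrix.kroneckerMap_apply, Matrix.diagonal_apply_eq]
        simp only [Finset.mul_sum]
        refine Finset.sum_congr rfl fun k' _ => by ring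
      · intro g' _ hg'
        apply Finset.sum_eq_zero
        intro k' _
        simp [Matrix.kroneckerMap_apply, Matrix.diagonal_apply, Ne.symm hg']
      · simp
    rw [hq]
    obtain ⟨⟨g0, k0⟩, hgk⟩ := Function.ne_iff.mp hx
    refine Finset.sum_pos' (fun g _ => ?_) ⟨g0, Finset.mem_univ _, ?_⟩
    · refine mul_nonneg (hd g).le ?_
      have := hS.posSemidef.dotProduct_mulVec_nonneg (fun k => x (g, k))
      simpa [funext (fun k => (rfl : star (x (g, k)) = x (g, k)))] using this
    · refine mul_pos (hd g0) ?_
      have hne : (fun k => x (g0, k)) ≠ 0 := fun h => hgk (congrFun h k0)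
      have := hS.dotProduct_mulVec_pos hne
      simpa using this

/-- The key matrix-orthogonality identity from the proof of Lemma B.1 of the paper. -/
theorem stmt_1 {N G K r : ℕ} (hN : 0 < N) (hG : 0 < G) (hK : 0 < K) (hr : 0 < r)
    (γ : Fin N → Fin G) (hγ : ∀ g : Fin G, ∃ i : Fin N, γ i = g)
    (S : Matrix (Fin K) (Fin K) ℝ) (hS : S.PosDef)
    (R : Matrix (Fin r) (Fin G × Fin K) ℝ) (hR : R.rank = r) :
    ((1 : Matrix (Fin N × Fin K) (Fin N × Fin K) ℝ) -
        Dbb K γ *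
          ((1 : Matrix (Fin G × Fin K) (Fin G × Fin K) ℝ) -
            (Ntil γ S)⁻¹ * Rᵀ * (R * (Ntil γ S)⁻¹ * Rᵀ)⁻¹ * R) *
          ((Dbb K γ)ᵀ * Dbb K γ)⁻¹ * (Dbb K γ)ᵀ -
        ((1 : Matrix (Fin N) (Fin N) ℝ) ⊗ₖ S⁻¹) * Dbb K γ *
          ((Dbb K γ)ᵀ * Dbb K γ)⁻¹ * Ntil γ S *
          ((Dbb K γ)ᵀ * Dbb K γ)⁻¹ * (Dbb K γ)ᵀ) *
      (((1 : Matrix (Fin N) (Fin N) ℝ) ⊗ₖ S⁻¹) *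
        (Dbb K γ * ((Dbb K γ)ᵀ * Dbb K γ)⁻¹ * Rᵀ)) = 0 := by
  classical
  obtain ⟨D, hD⟩ : ∃ M, M = Dbb K γ := ⟨_, rfl⟩
  obtain ⟨Nt, hNtd⟩ : ∃ M, M = Ntil γ S := ⟨_, rfl⟩
  rw [← hD, ← hNtd]
  have hDbb : D = Dmat γ ⊗ₖ (1 : Matrix (Fin K) (Fin K) ℝ) := hD.trans rfl
  have hNtil : Nt =
      (Matrix.diagonal fun g : Fin G => (ngrp γ g : ℝ)) ⊗ₖ S := hNtd.trans rfl
  have hnpos : ∀ g : Fin G, 0 < ((ngrp γ g : ℝ)) := by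
    intro g
    obtain ⟨i, hi⟩ := hγ g
    have : 0 < ngrp γ g := Finset.card_pos.mpr ⟨i, by simp [ngrp, hi]⟩
    exact_mod_cast this
  have hnne : ∀ g : Fin G, ((ngrp γ g : ℝ)) ≠ 0 := fun g => (hnpos g).ne'
  have hSdet : IsUnit S.det := hS.det_pos.ne'.isUnit
  have hSS : S * S⁻¹ = 1 := Matrix.mul_nonsing_inv _ hSdet
  have hA : Dᵀ * D =
      (Matrix.diagonal fun g : Fin G => (ngrp γ g : ℝ)) ⊗ₖ
        (1 : Matrix (Fin K) (Fin K) ℝ) := by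
    rw [hDbb, ← Matrix.kroneckerMap_transpose, ← Matrix.mul_kronecker_mul,
      DmatT_mul_Dmat, Matrix.transpose_one, Matrix.one_mul]
  have hdiag : (Matrix.diagonal fun g : Fin G => (ngrp γ g : ℝ)) *
      (Matrix.diagonal fun g : Fin G => ((ngrp γ g : ℝ))⁻¹) = 1 := by
    have h1 : (fun g : Fin G => (ngrp γ g : ℝ) * ((ngrp γ g : ℝ))⁻¹) = fun _ => (1 : ℝ) :=
      funext fun g => mul_inv_cancel₀ (hnne g)
    rw [Matrix.diagonal_mul_diagonal, h1, Matrix.diagonal_one]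
  have hdiag' : (Matrix.diagonal fun g : Fin G => ((ngrp γ g : ℝ))⁻¹) *
      (Matrix.diagonal fun g : Fin G => (ngrp γ g : ℝ)) = 1 := by
    have h1 : (fun g : Fin G => ((ngrp γ g : ℝ))⁻¹ * (ngrp γ g : ℝ)) = fun _ => (1 : ℝ) :=
      funext fun g => inv_mul_cancel₀ (hnne g)
    rw [Matrix.diagonal_mul_diagonal, h1, Matrix.diagonal_one]
  have hAinv : (Dᵀ * D)⁻¹ =
      (Matrix.diagonal fun g : Fin G => ((ngrp γ g : ℝ))⁻¹) ⊗ₖ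
        (1 : Matrix (Fin K) (Fin K) ℝ) := by
    rw [hA]
    apply Matrix.inv_eq_right_inv
    rw [← Matrix.mul_kronecker_mul, hdiag, Matrix.one_mul, Matrix.one_kronecker_one]
  have hNinv : Nt⁻¹ =
      (Matrix.diagonal fun g : Fin G => ((ngrp γ g : ℝ))⁻¹) ⊗ₖ S⁻¹ := by
    rw [hNtil]
    apply Matrix.inv_eq_right_inv
    rw [← Matrix.mul_kronecker_mul, hdiag, hSS, Matrix.one_kronecker_one]
  have hiAA : (Dᵀ * D)⁻¹ * (Dᵀ * D) = 1 := by
    rw [hAinv, hA, ← Matrix.mul_kronecker_mul, hdiag', Matrix.one_mul,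
      Matrix.one_kronecker_one]
  have hNNi : Nt * Nt⁻¹ = 1 := by
    rw [hNinv, hNtil, ← Matrix.mul_kronecker_mul, hdiag, hSS,
      Matrix.one_kronecker_one]
  -- rewriting lemmas
  have kED : ∀ (m : Type) [Fintype m] (X : Matrix (Fin G × Fin K) m ℝ),
      ((1 : Matrix (Fin N) (Fin N) ℝ) ⊗ₖ S⁻¹) * (D * X) =
        D * (((1 : Matrix (Fin G) (Fin G) ℝ) ⊗ₖ S⁻¹) * X) := by
    intro m _ X
    rw [← Matrix.mul_assoc, ← Matrix.mul_assoc]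
    congr 1
    rw [hDbb, ← Matrix.mul_kronecker_mul, ← Matrix.mul_kronecker_mul,
      Matrix.one_mul, Matrix.mul_one, Matrix.one_mul, Matrix.mul_one]
  have kFiA : ∀ (m : Type) [Fintype m] (X : Matrix (Fin G × Fin K) m ℝ),
      ((1 : Matrix (Fin G) (Fin G) ℝ) ⊗ₖ S⁻¹) * ((Dᵀ * D)⁻¹ * X) = Nt⁻¹ * X := by
    intro m _ X
    rw [← Matrix.mul_assoc]
    congr 1
    rw [hAinv, hNinv, ← Matrix.mul_kronecker_mul, Matrix.one_mul, Matrix.mul_one]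
  have kDiA : ∀ (m : Type) [Fintype m] (X : Matrix (Fin G × Fin K) m ℝ),
      (Dᵀ * D)⁻¹ * (Dᵀ * (D * X)) = X := by
    intro m _ X
    rw [← Matrix.mul_assoc Dᵀ D X, ← Matrix.mul_assoc, hiAA, Matrix.one_mul]
  have kiNt : ∀ (m : Type) [Fintype m] (X : Matrix (Fin G × Fin K) m ℝ),
      Nt * (Nt⁻¹ * X) = X := by
    intro m _ X
    rw [← Matrix.mul_assoc, hNNi, Matrix.one_mul]
  -- invertibility of R Nt⁻¹ Rᵀ
  have hrows : LinearIndependent ℝ (fun i => R i) := by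
    rw [linearIndependent_iff_card_eq_finrank_span, Fintype.card_fin, Set.finrank]
    exact hR.symm.trans (Matrix.rank_eq_finrank_span_row R)
  have hNipd : (Nt⁻¹).PosDef := by
    rw [hNinv]
    exact kron_diag_posDef _ (fun g => inv_pos.mpr (hnpos g)) hS.inv
  have hWpd : (R * Nt⁻¹ * Rᵀ).PosDef := by
    rw [Matrix.posDef_iff_dotProduct_mulVec]
    constructor
    · have h1 := (hNipd.posSemidef.mul_mul_conjTranspose_same R).1
      have hRT : Rᴴ = Rᵀ := rfl
      rwa [hRT] at h1
    · intro x hx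
      have hy : x ᵥ* R ≠ 0 := by
        intro h
        apply hx
        have hinj := Matrix.vecMul_injective_iff.mpr hrows
        have h0 : (0 : Fin r → ℝ) ᵥ* R = 0 := Matrix.zero_vecMul _
        exact hinj (h.trans h0.symm)
      have hst : ∀ {ι : Type} [Fintype ι] (v : ι → ℝ), (star v : ι → ℝ) = v :=
        fun v => funext fun _ => rfl
      have key : star x ⬝ᵥ ((R * Nt⁻¹ * Rᵀ) *ᵥ x) =
          star (x ᵥ* R) ⬝ᵥ (Nt⁻¹ *ᵥ (x ᵥ* R)) := by
        rw [hst, hst, ← Matrix.mulVec_mulVec, ← Matrix.mulVec_mulVec,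
          Matrix.dotProduct_mulVec, Matrix.mulVec_transpose]
      rw [key]
      exact hNipd.dotProduct_mulVec_pos hy
  have kW : (R * (Nt⁻¹ * Rᵀ))⁻¹ * (R * (Nt⁻¹ * Rᵀ)) = 1 := by
    have h := Matrix.nonsing_inv_mul (R * Nt⁻¹ * Rᵀ) hWpd.det_pos.ne'.isUnit
    rw [Matrix.mul_assoc] at h
    exact h
  -- main computation
  simp only [Matrix.mul_sub, Matrix.sub_mul, Matrix.one_mul, Matrix.mul_one,
    Matrix.mul_assoc]
  simp only [kED, kFiA, kDiA, kiNt, kW, Matrix.mul_one]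
  abel
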